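/- Let G be a finite group, I and Λ finite index sets, and P a regular Λ×I matrix with entries in G⁰ containing at least one zero entry. (1) If |G| ≥ 3, then C(M⁰[G;I,Λ;P]) contains a cycle and its girth equals 3. (2) If |G| = 2, then C(M⁰[G;I,Λ;P]) contains a cycle if and only if P contains more than one zero entry, in which case its girth equals 3. -/

import Mathlib

variable {G : Type*} [Group G] {I Λ : Type*}

/-- Multiplication in the 0-Rees matrix semigroup `M⁰[G;I,Λ;P]` on `(I×G×Λ) ∪ {0}`.
The zero element is `none`, and a zero entry of `P` is encoded as `none`. -/
def reesMul (P : Λ → I → Option G) :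
    Option (I × G × Λ) → Option (I × G × Λ) → Option (I × G × Λ)
  | some (i, x, l), some (j, y, m) => (P l j).map fun p => (i, x * p * y, m)
  | _, _ => none

/-- The commuting graph of `M⁰[G;I,Λ;P]`. Its vertex set is `I×G×Λ`, the set of
non-central elements (the center is `{0}`). -/
def commGraph (P : Λ → I → Option G) : SimpleGraph (I × G × Λ) where
  Adj a b := a ≠ b ∧ reesMul P (some a) (some b) = reesMul P (some b) (some a)
  symm := ⟨fun _ _ h => ⟨h.1.symm, h.2.symm⟩⟩
  loopless := ⟨fun _ h => h.1 rfl⟩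

/-!
If the entries `p_{λj}` and `p_{μi}` both vanish, then `(i,x,λ)` and `(j,y,μ)` commute, both
products being `0`. Hence the `|G|` elements of a zero cell `(i,λ)` form a clique, which contains a
triangle once `|G| ≥ 3`. For `|G| = 2` the group is abelian, so each non-zero cell is a clique as
well, and two zero entries `(i,λ) ≠ (j,μ)` give the triangle `(i,1,μ), (i,g,μ), (j,1,λ)`.
Conversely, if `P` has a single zero entry, commuting elements lie in the same cell; for `|G| = 2`
every vertex then has at most one neighbour, and a graph of maximum degree `1` is acyclic.
-/

namespace SimpleGraph

variable {V : Type*} {H : SimpleGraph V}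

lemma not_isAcyclic_and_girth_eq_three_of_adj {a b c : V}
    (hab : H.Adj a b) (hbc : H.Adj b c) (hca : H.Adj c a) :
    ¬ H.IsAcyclic ∧ H.girth = 3 := by
  let w : H.Walk a a := .cons hab (.cons hbc (.cons hca .nil))
  have hw : w.IsCycle := by
    simp [w, Walk.isCycle_def, hab.ne, hbc.ne, hca.ne, hab.ne', hca.ne']
  have hcyc : ¬ H.IsAcyclic := fun h => h w hw
  exact ⟨hcyc, le_antisymm (girth_le_length hw) (three_le_girth hcyc)⟩

lemma isAcyclic_of_adj_unique (h : ∀ {a b c : V}, H.Adj a b → H.Adj a c → b = c) :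
    H.IsAcyclic :=
  fun _ _ hw => hw.snd_ne_penultimate <|
    h (Walk.adj_snd hw.not_nil) (Walk.adj_penultimate hw.not_nil).symm

end SimpleGraph

/-- Positions are stored as `(i, λ)`, although `P` is indexed by `λ` first. -/
def zeroEntries {α : Type*} (P : Λ → I → Option α) : Set (I × Λ) := {c | P c.2 c.1 = none}

lemma nontrivial_zeroEntries_iff {α : Type*} (P : Λ → I → Option α) :
    (zeroEntries P).Nontrivial ↔
      ∃ (i j : I) (l m : Λ), (i, l) ≠ (j, m) ∧ P l i = none ∧ P m j = none := by
  constructor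
  · rintro ⟨⟨i, l⟩, hil, ⟨j, m⟩, hjm, hne⟩
    exact ⟨i, j, l, m, hne, hil, hjm⟩
  · rintro ⟨i, j, l, m, hne, hil, hjm⟩
    exact ⟨(i, l), hil, (j, m), hjm, hne⟩

section commGraph

variable {P : Λ → I → Option G} {i j : I} {l m : Λ} {x y : G}

lemma commGraph_adj_of_eq_none (hlj : P l j = none) (hmi : P m i = none)
    (hne : (i, x, l) ≠ (j, y, m)) : (commGraph P).Adj (i, x, l) (j, y, m) :=
  ⟨hne, by simp [reesMul, hlj, hmi]⟩

lemma commGraph_adj_of_isMulCommutative [IsMulCommutative G] (hxy : x ≠ y) :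
    (commGraph P).Adj (i, x, l) (i, y, l) := by
  refine ⟨by simp [hxy], ?_⟩
  cases hli : P l i with
  | none => simp [reesMul, hli]
  | some p =>
    simp only [reesMul, hli, Option.map_some]
    rw [mul_comm' x p, mul_assoc y, mul_comm' y (p * x)]

/-- The two products lie in the cells `(i,μ)` and `(j,λ)` unless both vanish, in which case
`(j,λ)` and `(i,μ)` are zero entries. -/
lemma commGraph_adj_same_cell (hP : (zeroEntries P).Subsingleton)
    (h : (commGraph P).Adj (i, x, l) (j, y, m)) : i = j ∧ l = m := by
  have hcomm := h.2
  simp only [reesMul] at hcomm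
  cases hlj : P l j <;> cases hmi : P m i <;> simp only [hlj, hmi] at hcomm
  · have := hP (show (j, l) ∈ zeroEntries P from hlj) (show (i, m) ∈ zeroEntries P from hmi)
    simp only [Prod.mk.injEq] at this
    exact ⟨this.1.symm, this.2⟩
  all_goals simp only [Option.map_some, Option.map_none, reduceCtorEq, Option.some_inj,
    Prod.mk.injEq] at hcomm
  exact ⟨hcomm.1, hcomm.2.2.symm⟩

lemma not_isAcyclic_commGraph_and_girth_eq_three_of_two_lt_card [Fintype G]
    (hG : 2 < Fintype.card G) (hP : (zeroEntries P).Nonempty) :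
    ¬ (commGraph P).IsAcyclic ∧ (commGraph P).girth = 3 := by
  obtain ⟨⟨i, l⟩, hil⟩ := hP
  obtain ⟨a, b, c, hab, hac, hbc⟩ := Fintype.two_lt_card_iff.mp hG
  have adj : ∀ {x y : G}, x ≠ y → (commGraph P).Adj (i, x, l) (i, y, l) := fun hxy =>
    commGraph_adj_of_eq_none hil hil (by simp [hxy])
  exact SimpleGraph.not_isAcyclic_and_girth_eq_three_of_adj (adj hab) (adj hbc) (adj hac.symm)

lemma not_isAcyclic_commGraph_and_girth_eq_three_of_nontrivial [IsMulCommutative G]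
    [Nontrivial G] (hP : (zeroEntries P).Nontrivial) :
    ¬ (commGraph P).IsAcyclic ∧ (commGraph P).girth = 3 := by
  obtain ⟨⟨i, l⟩, hil, ⟨j, m⟩, hjm, hne⟩ := hP
  obtain ⟨g, hg⟩ := exists_ne (1 : G)
  have hcell : ∀ x : G, (i, x, m) ≠ (j, 1, l) := fun x h => hne (by simp_all)
  exact SimpleGraph.not_isAcyclic_and_girth_eq_three_of_adj
    (commGraph_adj_of_isMulCommutative hg.symm)
    (commGraph_adj_of_eq_none hjm hil (hcell g))
    (commGraph_adj_of_eq_none hjm hil (hcell 1)).symm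

lemma isAcyclic_commGraph_of_card_eq_two [Fintype G] (hG : Fintype.card G = 2)
    (hP : (zeroEntries P).Subsingleton) : (commGraph P).IsAcyclic := by
  refine SimpleGraph.isAcyclic_of_adj_unique fun {a b c} hab hac => ?_
  obtain ⟨i, x, l⟩ := a
  obtain ⟨j, y, m⟩ := b
  obtain ⟨k, z, n⟩ := c
  obtain ⟨rfl, rfl⟩ := commGraph_adj_same_cell hP hab
  obtain ⟨rfl, rfl⟩ := commGraph_adj_same_cell hP hac
  by_contra hyz
  have : 2 < Fintype.card G :=
    Fintype.two_lt_card_iff.mpr ⟨x, y, z, by rintro rfl; exact hab.ne rfl,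
      by rintro rfl; exact hac.ne rfl, by rintro rfl; exact hyz rfl⟩
  omega

end commGraph

theorem stmt_16_general [Fintype G] (P : Λ → I → Option G)
    (hzero : ∃ (i : I) (l : Λ), P l i = none) :
    (3 ≤ Fintype.card G →
      ¬ (commGraph P).IsAcyclic ∧ (commGraph P).girth = 3) ∧
    (Fintype.card G = 2 →
      (¬ (commGraph P).IsAcyclic ↔
        ∃ (i j : I) (l m : Λ), (i, l) ≠ (j, m) ∧ P l i = none ∧ P m j = none) ∧
      ((∃ (i j : I) (l m : Λ), (i, l) ≠ (j, m) ∧ P l i = none ∧ P m j = none) →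
        (commGraph P).girth = 3)) := by
  obtain ⟨i, l, hil⟩ := hzero
  rw [← nontrivial_zeroEntries_iff]
  refine ⟨fun hG => not_isAcyclic_commGraph_and_girth_eq_three_of_two_lt_card hG ⟨(i, l), hil⟩,
    fun hG => ?_⟩
  have : IsCyclic G := isCyclic_of_prime_card (p := 2) (by rwa [Nat.card_eq_fintype_card])
  have : Nontrivial G := Fintype.one_lt_card_iff_nontrivial.mp (by omega)
  refine ⟨⟨fun hcyc => ?_, fun hP => (not_isAcyclic_commGraph_and_girth_eq_three_of_nontrivial hP).1⟩,
    fun hP => (not_isAcyclic_commGraph_and_girth_eq_three_of_nontrivial hP).2⟩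
  by_contra hP
  exact hcyc (isAcyclic_commGraph_of_card_eq_two hG (Set.not_nontrivial_iff.mp hP))

/-- (1) If `|G| ≥ 3`, then `C(M⁰[G;I,Λ;P])` contains a cycle and its girth equals `3`.
(2) If `|G| = 2`, then `C(M⁰[G;I,Λ;P])` contains a cycle iff `P` contains more than one
zero entry, in which case its girth equals `3`. -/
theorem stmt_16 [Fintype G] [Fintype I] [Fintype Λ] (P : Λ → I → Option G)
    (hrow : ∀ l : Λ, ∃ i : I, P l i ≠ none)
    (hcol : ∀ i : I, ∃ l : Λ, P l i ≠ none)
    (hzero : ∃ (i : I) (l : Λ), P l i = none) :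
    (3 ≤ Fintype.card G →
      ¬ (commGraph P).IsAcyclic ∧ (commGraph P).girth = 3) ∧
    (Fintype.card G = 2 →
      (¬ (commGraph P).IsAcyclic ↔
        ∃ (i j : I) (l m : Λ), (i, l) ≠ (j, m) ∧ P l i = none ∧ P m j = none) ∧
      ((∃ (i j : I) (l m : Λ), (i, l) ≠ (j, m) ∧ P l i = none ∧ P m j = none) →
        (commGraph P).girth = 3)) :=
  stmt_16_general P hzero
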